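/- For every integer m ≥ 1 and all z ∈ ℂ with z ≠ 0, φ_{mp}(z) − φ*_{mp}(z) = z^{(m−1)p/2} · U_{m−1}(Δ(z)/2) · (φ_p(z) − φ_p*(z)), where U_{m−1} is the Chebyshev polynomial of the second kind. (This is the identity form of Theorem 3.1: the zeros of φ_{mp} − φ*_{mp} are exactly the Dirichlet points, i.e., the zeros of φ_p − φ_p*, together with the points where U_{m−1}(Δ/2) vanishes.) -/

import Mathlib

/-!
Evaluating the Szegő recursion at `z` gives `(φ_n(z), φ_n*(z))ᵀ = T_n(z) (1, 1)ᵀ`, and periodicity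
gives `T_{mp} = B^m` with `B = T_p(z)`. Each `A_k(z)` has determinant `z`, so by Cayley–Hamilton
`B² = 2cx B - c²` with `c = z^{p/2}` and `x = Δ(z)/2`. For any such `B` the Chebyshev recursion
yields `B^m = c^{m-1} U_{m-1}(x) B - c^m U_{m-2}(x)`; applying this to `(1, 1)ᵀ` and subtracting
the two components, the scalar term cancels.
-/

open Polynomial Matrix

/-- `ρ_n = (1 - |α_n|²)^{1/2}`. -/
noncomputable def szRho (α : ℕ → ℂ) (n : ℕ) : ℝ := Real.sqrt (1 - ‖α n‖ ^ 2)

/-- The one-step Szegő transfer matrix `A_k(z)`. -/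
noncomputable def SzegoA (α : ℕ → ℂ) (k : ℕ) (z : ℂ) : Matrix (Fin 2) (Fin 2) ℂ :=
  ((szRho α k : ℂ))⁻¹ • !![z, -(starRingEnd ℂ (α k)); -z * α k, 1]

/-- The transfer matrix `T_n(z) = A_{n-1}(z) ⋯ A_0(z)`. -/
noncomputable def SzegoT (α : ℕ → ℂ) : ℕ → ℂ → Matrix (Fin 2) (Fin 2) ℂ
  | 0, _ => 1
  | n + 1, z => SzegoA α n z * SzegoT α n z

/-- The discriminant `Δ(z) = z^{-p/2} tr T_p(z)` (for `p` even, `z ≠ 0`). -/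
noncomputable def SzegoDisc (α : ℕ → ℂ) (p : ℕ) (z : ℂ) : ℂ :=
  (z ^ (p / 2))⁻¹ * (SzegoT α p z).trace

theorem pow_succ_eq_chebyshevU_smul_sub {R A : Type*} [CommRing R] [Ring A] [Algebra R A]
    {b : A} {c x : R}
    (hb : b ^ 2 = (2 * c * x) • b - c ^ 2 • 1) (n : ℕ) :
    b ^ (n + 1) = (c ^ n * (Chebyshev.U R n).eval x) • b -
      (c ^ (n + 1) * (Chebyshev.U R ((n : ℤ) - 1)).eval x) • 1 := by
  induction n with
  | zero => simp
  | succ n ih =>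
    have hU : (Chebyshev.U R ((n + 1 : ℕ) : ℤ)).eval x =
        2 * x * (Chebyshev.U R n).eval x - (Chebyshev.U R ((n : ℤ) - 1)).eval x := by
      simp [Chebyshev.U_add_one]
    rw [pow_succ', ih, mul_sub, mul_smul_comm, mul_smul_comm, ← sq, hb, hU]
    push_cast
    simp only [add_sub_cancel_right, smul_sub, smul_smul, mul_one, sub_smul, mul_sub]
    module

theorem Matrix.sq_eq_trace_smul_sub_det_smul_fin_two {R : Type*} [CommRing R]
    (M : Matrix (Fin 2) (Fin 2) R) : M ^ 2 = M.trace • M - M.det • 1 := by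
  nontriviality R
  have h := M.aeval_self_charpoly
  rw [charpoly_fin_two] at h
  simp only [map_add, map_sub, map_pow, aeval_X, map_mul, aeval_C, Algebra.algebraMap_eq_smul_one,
    smul_mul_assoc, one_mul] at h
  rw [← sub_eq_zero, ← h]
  abel

section Szego

variable {α : ℕ → ℂ}

theorem szRho_sq {n : ℕ} (h : ‖α n‖ ≤ 1) :
    (szRho α n : ℂ) ^ 2 = 1 - α n * starRingEnd ℂ (α n) := by
  have h_nonneg : (0 : ℝ) ≤ 1 - ‖α n‖ ^ 2 := by nlinarith [norm_nonneg (α n)]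
  rw [Complex.mul_conj', ← Complex.ofReal_pow, szRho, Real.sq_sqrt h_nonneg]
  push_cast
  ring

theorem szRho_ne_zero {n : ℕ} (h : ‖α n‖ < 1) : (szRho α n : ℂ) ≠ 0 := by
  have h_pos : (0 : ℝ) < 1 - ‖α n‖ ^ 2 := by nlinarith [norm_nonneg (α n)]
  exact_mod_cast (Real.sqrt_pos.mpr h_pos).ne'

theorem det_szegoA {k : ℕ} (h : ‖α k‖ < 1) (z : ℂ) : (SzegoA α k z).det = z := by
  have hρ := szRho_ne_zero h
  rw [SzegoA, det_smul, det_fin_two_of, Fintype.card_fin,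
    show z * 1 - -starRingEnd ℂ (α k) * (-z * α k) = z * (szRho α k : ℂ) ^ 2 by
      rw [szRho_sq h.le]; ring]
  field_simp

theorem det_szegoT (hα : ∀ k, ‖α k‖ < 1) (n : ℕ) (z : ℂ) : (SzegoT α n z).det = z ^ n := by
  induction n with
  | zero => simp [SzegoT]
  | succ n ih => rw [SzegoT, det_mul, det_szegoA (hα n), ih, pow_succ']

theorem szegoT_add_period {p : ℕ} (hper : ∀ n, α (n + p) = α n) (n : ℕ) (z : ℂ) :
    SzegoT α (n + p) z = SzegoT α n z * SzegoT α p z := by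
  induction n with
  | zero => simp [SzegoT]
  | succ n ih =>
    have hA : SzegoA α (n + p) z = SzegoA α n z := by simp only [SzegoA, szRho, hper n]
    rw [Nat.add_right_comm, SzegoT, hA, ih, SzegoT, Matrix.mul_assoc]

theorem szegoT_mul_period {p : ℕ} (hper : ∀ n, α (n + p) = α n) (m : ℕ) (z : ℂ) :
    SzegoT α (m * p) z = SzegoT α p z ^ m := by
  induction m with
  | zero => simp [SzegoT]
  | succ m ih => rw [Nat.succ_mul, szegoT_add_period hper, ih, pow_succ]

theorem szegoT_period_sq {p : ℕ} (hα : ∀ k, ‖α k‖ < 1) (hp : Even p) {z : ℂ} (hz : z ≠ 0) :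
    SzegoT α p z ^ 2 = (2 * z ^ (p / 2) * (SzegoDisc α p z / 2)) • SzegoT α p z -
      (z ^ (p / 2)) ^ 2 • 1 := by
  have htrace : (SzegoT α p z).trace = 2 * z ^ (p / 2) * (SzegoDisc α p z / 2) := by
    rw [SzegoDisc]
    field_simp
  rw [sq_eq_trace_smul_sub_det_smul_fin_two, det_szegoT hα, htrace, ← pow_mul,
    Nat.div_mul_cancel hp.two_dvd]

variable {φ φs : ℕ → ℂ[X]} {z : ℂ}

theorem aeval_phis_succ
    (hφrec : ∀ n, φ (n + 1) =
      C ((szRho α n : ℂ))⁻¹ * (X * φ n - C (starRingEnd ℂ (α n)) * φs n))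
    (hφs : ∀ n, ∀ z : ℂ, z ≠ 0 →
      aeval z (φs n) = z ^ n * starRingEnd ℂ (aeval ((starRingEnd ℂ z)⁻¹) (φ n)))
    (hz : z ≠ 0) (n : ℕ) :
    aeval z (φs (n + 1)) = (szRho α n : ℂ)⁻¹ * (aeval z (φs n) - z * α n * aeval z (φ n)) := by
  have hφs_inv : aeval (starRingEnd ℂ z)⁻¹ (φs n) =
      (starRingEnd ℂ z)⁻¹ ^ n * starRingEnd ℂ (aeval z (φ n)) := by
    have h := hφs n (starRingEnd ℂ z)⁻¹ (by simpa using hz)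
    rwa [map_inv₀, Complex.conj_conj, inv_inv] at h
  rw [hφs (n + 1) z hz, hφrec n, hφs n z hz]
  simp only [map_mul, map_sub, aeval_C, aeval_X, Algebra.algebraMap_self, RingHom.id_apply,
    hφs_inv, map_inv₀, map_pow, Complex.conj_conj, Complex.conj_ofReal, inv_pow]
  field_simp
  ring

theorem szegoT_mulVec_one_one (hφ0 : φ 0 = 1)
    (hφrec : ∀ n, φ (n + 1) =
      C ((szRho α n : ℂ))⁻¹ * (X * φ n - C (starRingEnd ℂ (α n)) * φs n))
    (hφs : ∀ n, ∀ z : ℂ, z ≠ 0 →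
      aeval z (φs n) = z ^ n * starRingEnd ℂ (aeval ((starRingEnd ℂ z)⁻¹) (φ n)))
    (hz : z ≠ 0) (n : ℕ) :
    SzegoT α n z *ᵥ ![1, 1] = ![aeval z (φ n), aeval z (φs n)] := by
  induction n with
  | zero => simp [SzegoT, hφs 0 z hz, hφ0]
  | succ n ih =>
    rw [SzegoT, ← mulVec_mulVec, ih, aeval_phis_succ hφrec hφs hz, hφrec]
    ext i
    fin_cases i <;> simp [SzegoA, mulVec, dotProduct, Fin.sum_univ_two] <;> ring

end Szego

theorem opuc_periodic_phi_minus_phistar_chebyshev_identity_general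
    (p : ℕ) (hpeven : Even p)
    (α : ℕ → ℂ)
    (hα : ∀ n, ‖α n‖ < 1)
    (hper : ∀ n, α (n + p) = α n)
    (φ φs : ℕ → Polynomial ℂ)
    (hφ0 : φ 0 = 1)
    (hφrec : ∀ n, φ (n + 1) =
      C ((szRho α n : ℂ))⁻¹ * (X * φ n - C (starRingEnd ℂ (α n)) * φs n))
    (hφs : ∀ n, ∀ z : ℂ, z ≠ 0 →
      aeval z (φs n) = z ^ n * starRingEnd ℂ (aeval ((starRingEnd ℂ z)⁻¹) (φ n)))
    (m : ℕ) (hm : 1 ≤ m) (z : ℂ) (hz : z ≠ 0) :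
    aeval z (φ (m * p)) - aeval z (φs (m * p)) =
      z ^ ((m - 1) * p / 2) *
        (Polynomial.Chebyshev.U ℂ ((m : ℤ) - 1)).eval (SzegoDisc α p z / 2) *
        (aeval z (φ p) - aeval z (φs p)) := by
  obtain ⟨n, rfl⟩ := Nat.exists_eq_add_of_le' hm
  have hpow := congrArg (· *ᵥ ![(1 : ℂ), 1])
    (pow_succ_eq_chebyshevU_smul_sub (szegoT_period_sq hα hpeven hz) n)
  simp only [← szegoT_mul_period hper, sub_mulVec, smul_mulVec, one_mulVec,
    szegoT_mulVec_one_one hφ0 hφrec hφs hz] at hpow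
  have hexp : (n + 1 - 1) * p / 2 = p / 2 * n := by
    rw [Nat.add_sub_cancel, Nat.mul_div_assoc n hpeven.two_dvd, mul_comm]
  have h0 := congrFun hpow 0
  have h1 := congrFun hpow 1
  simp only [Pi.sub_apply, Pi.smul_apply, smul_eq_mul, cons_val_zero, cons_val_one, mul_one]
    at h0 h1
  rw [h0, h1, hexp, pow_mul, Nat.cast_add_one, add_sub_cancel_right]
  ring

/-- **Theorem 3.1 (identity form).** For periodic Verblunsky coefficients of even
period `p`, `φ_{mp}(z) - φ*_{mp}(z) = z^{(m-1)p/2} U_{m-1}(Δ(z)/2) (φ_p(z) - φ_p*(z))`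
for all `z ≠ 0` and `m ≥ 1`. -/
theorem opuc_periodic_phi_minus_phistar_chebyshev_identity
    (p : ℕ) (hp : 0 < p) (hpeven : Even p)
    (α : ℕ → ℂ)
    (hα : ∀ n, ‖α n‖ < 1)
    (hper : ∀ n, α (n + p) = α n)
    (φ φs : ℕ → Polynomial ℂ)
    (hφ0 : φ 0 = 1)
    (hφrec : ∀ n, φ (n + 1) =
      C ((szRho α n : ℂ))⁻¹ * (X * φ n - C (starRingEnd ℂ (α n)) * φs n))
    (hφs : ∀ n, ∀ z : ℂ, z ≠ 0 →
      aeval z (φs n) = z ^ n * starRingEnd ℂ (aeval ((starRingEnd ℂ z)⁻¹) (φ n)))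
    (m : ℕ) (hm : 1 ≤ m) (z : ℂ) (hz : z ≠ 0) :
    aeval z (φ (m * p)) - aeval z (φs (m * p)) =
      z ^ ((m - 1) * p / 2) *
        (Polynomial.Chebyshev.U ℂ ((m : ℤ) - 1)).eval (SzegoDisc α p z / 2) *
        (aeval z (φ p) - aeval z (φs p)) :=
  opuc_periodic_phi_minus_phistar_chebyshev_identity_general p hpeven α hα hper φ φs hφ0 hφrec hφs m
    hm z hz
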